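/- arXiv:2111.08904 — 3 statements merged into one kernel-verified Lean document; each statement's English description precedes it below -/
import Mathlib

section
/- Let H ≥ 2, T ≥ 1 and ϑ ∈ ℝ. Let (η_1, …, η_T) be a T-cycle of the generalized tent map f with η_j ≠ 1/2 for all j, and let μ = (f^T)'(η_1) be its multiplier. Then the T-th iterate F^T of the controlled map F is differentiable at each η_j and (F^T)'(η_j) = μ·(ϑ + (1 − ϑ)·μ)^T. -/
/-- The generalized tent map. -/
noncomputable def tent (H : ℝ) (x : ℝ) : ℝ := if x ≤ 1 / 2 then H * x else H * (1 - x)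

/-- The controlled (predictive control) map `F(x) = f(ϑ x + (1-ϑ) f^T(x))`. -/
noncomputable def ctrl (H : ℝ) (T : ℕ) (ϑ : ℝ) (x : ℝ) : ℝ :=
  tent H (ϑ * x + (1 - ϑ) * (tent H)^[T] x)

/-- `η 0, …, η (T-1)` is a `T`-cycle of `g`: the values are pairwise distinct,
`η (j+1) = g (η j)`, and the cycle closes up (`η T = η 0`, hence `η` is `T`-periodic). -/
def IsCycle (g : ℝ → ℝ) (T : ℕ) (η : ℕ → ℝ) : Prop :=
  (∀ i < T, ∀ j < T, η i = η j → i = j) ∧ (∀ j, η (j + 1) = g (η j)) ∧ η T = η 0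

/-- Local slope of the tent map. -/
noncomputable def tder (H x : ℝ) : ℝ := if x < 1 / 2 then H else -H

lemma tent_hasDerivAt (H : ℝ) {x : ℝ} (hx : x ≠ 1 / 2) :
    HasDerivAt (tent H) (tder H x) x := by
  rcases lt_or_gt_of_ne hx with h | h
  · have hd : tder H x = H := if_pos h
    rw [hd]
    have h1 : HasDerivAt (fun y : ℝ => H * y) H x := by
      simpa using (hasDerivAt_id x).const_mul H
    refine h1.congr_of_eventuallyEq ?_
    filter_upwards [Iio_mem_nhds h] with y hy
    simp only [tent]
    rw [if_pos (le_of_lt (Set.mem_Iio.mp hy))]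
  · have hd : tder H x = -H := if_neg (not_lt.mpr (le_of_lt h))
    rw [hd]
    have h1 : HasDerivAt (fun y : ℝ => H * (1 - y)) (-H) x := by
      have := ((hasDerivAt_id x).const_sub 1).const_mul H
      simpa using this
    refine h1.congr_of_eventuallyEq ?_
    filter_upwards [Ioi_mem_nhds h] with y hy
    simp only [tent]
    rw [if_neg (not_le.mpr (Set.mem_Ioi.mp hy))]

theorem multiplier_of_cycle_of_ctrl (H : ℝ) (hH : 2 ≤ H) (T : ℕ) (hT : 1 ≤ T) (ϑ : ℝ)
    (η : ℕ → ℝ) (hcyc : IsCycle (tent H) T η) (hhalf : ∀ j < T, η j ≠ 1 / 2)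
    (μ : ℝ) (hμ : μ = deriv ((tent H)^[T]) (η 0)) :
    ∀ j < T, HasDerivAt ((ctrl H T ϑ)^[T]) (μ * (ϑ + (1 - ϑ) * μ) ^ T) (η j) := by
  obtain ⟨hinj, hstep, hclose⟩ := hcyc
  -- η j is the j-th iterate of η 0
  have hη : ∀ j, η j = (tent H)^[j] (η 0) := by
    intro j
    induction j with
    | zero => simp
    | succ n ih => rw [hstep n, ih, Function.iterate_succ_apply']
  have hper : ∀ j, η (j + T) = η j := by
    intro j
    have h1 : (tent H)^[T] (η 0) = η 0 := by rw [← hη T, hclose]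
    rw [hη (j + T), hη j, Function.iterate_add_apply, h1]
  have hperk : ∀ j k, η (j + k * T) = η j := by
    intro j k
    induction k with
    | zero => simp
    | succ n ih =>
      have : j + (n + 1) * T = (j + n * T) + T := by ring
      rw [this, hper, ih]
  have hall_half : ∀ j, η j ≠ 1 / 2 := by
    intro j
    have h1 : η j = η (j % T) := by
      conv_lhs => rw [← Nat.mod_add_div' j T]
      exact hperk (j % T) (j / T)
    rw [h1]
    exact hhalf (j % T) (Nat.mod_lt j hT)
  have hiter : ∀ j n, (tent H)^[n] (η j) = η (j + n) := by
    intro j n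
    rw [hη j, ← Function.iterate_add_apply, ← hη (n + j), add_comm]
  have hd : ∀ j, HasDerivAt (tent H) (tder H (η j)) (η j) := fun j =>
    tent_hasDerivAt H (hall_half j)
  -- derivative of iterates of tent along the cycle
  have hDiter : ∀ n j, HasDerivAt ((tent H)^[n])
      (∏ i ∈ Finset.range n, tder H (η (j + i))) (η j) := by
    intro n
    induction n with
    | zero => intro j; simpa using hasDerivAt_id (η j)
    | succ n ih =>
      intro j
      have h1 : HasDerivAt (tent H) (tder H (η (j + n))) ((tent H)^[n] (η j)) := by
        rw [hiter j n]; exact hd (j + n)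
      have h2 := h1.comp (η j) (ih j)
      rw [Function.iterate_succ', Finset.prod_range_succ, mul_comm]
      exact h2
  have hμ0 : μ = ∏ i ∈ Finset.range T, tder H (η i) := by
    rw [hμ, (hDiter T 0).deriv]
    simp
  have hshift : ∀ j, (∏ i ∈ Finset.range T, tder H (η (j + i))) = μ := by
    intro j
    induction j with
    | zero => simpa using hμ0.symm
    | succ j ih =>
      rw [← ih]
      obtain ⟨n, rfl⟩ : ∃ n, T = n + 1 := ⟨T - 1, (Nat.succ_pred_eq_of_pos hT).symm⟩
      rw [Finset.prod_range_succ, Finset.prod_range_succ']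
      have e1 : η (j + 1 + n) = η (j + 0) := by
        have : j + 1 + n = j + (n + 1) := by ring
        rw [this, hper j, add_zero]
      rw [e1]
      congr 1
      apply Finset.prod_congr rfl
      intro i _
      congr 2
      omega
  -- the cycle is also a cycle of the controlled map
  have hFfix : ∀ j, ϑ * η j + (1 - ϑ) * (tent H)^[T] (η j) = η j := by
    intro j
    rw [hiter j T, hper j]
    ring
  have hF : ∀ j, ctrl H T ϑ (η j) = η (j + 1) := by
    intro j
    rw [ctrl, hFfix j, hstep j]
  have hFiterval : ∀ n j, (ctrl H T ϑ)^[n] (η j) = η (j + n) := by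
    intro n
    induction n with
    | zero => simp
    | succ n ih =>
      intro j
      rw [Function.iterate_succ_apply', ih j, hF (j + n), add_assoc]
  set c : ℝ := ϑ + (1 - ϑ) * μ with hc
  have hFder : ∀ j, HasDerivAt (ctrl H T ϑ) (tder H (η j) * c) (η j) := by
    intro j
    have hg : HasDerivAt (fun x => ϑ * x + (1 - ϑ) * (tent H)^[T] x) c (η j) := by
      have h1 : HasDerivAt (fun x : ℝ => ϑ * x) ϑ (η j) := by
        simpa using (hasDerivAt_id (η j)).const_mul ϑ
      have h2 := ((hDiter T j).const_mul (1 - ϑ))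
      have h3 := h1.add h2
      rw [hshift j] at h3
      exact h3
    have htent : HasDerivAt (tent H) (tder H (η j))
        (ϑ * η j + (1 - ϑ) * (tent H)^[T] (η j)) := by
      rw [hFfix j]; exact hd j
    have := htent.comp (η j) hg
    exact this
  have hFDiter : ∀ n j, HasDerivAt ((ctrl H T ϑ)^[n])
      (∏ i ∈ Finset.range n, (tder H (η (j + i)) * c)) (η j) := by
    intro n
    induction n with
    | zero => intro j; simpa using hasDerivAt_id (η j)
    | succ n ih =>
      intro j
      have h1 : HasDerivAt (ctrl H T ϑ) (tder H (η (j + n)) * c)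
          ((ctrl H T ϑ)^[n] (η j)) := by
        rw [hFiterval n j]; exact hFder (j + n)
      have h2 := h1.comp (η j) (ih j)
      rw [Function.iterate_succ', Finset.prod_range_succ, mul_comm]
      exact h2
  intro j _
  have h := hFDiter T j
  have : (∏ i ∈ Finset.range T, (tder H (η (j + i)) * c)) = μ * c ^ T := by
    rw [Finset.prod_mul_distrib, hshift j, Finset.prod_const, Finset.card_range]
  rwa [this] at h
end

section
/- Let H ≥ 2, T ≥ 1 and (H^T − 1/H)/(H^T + 1) < ϑ ≤ H^T/(H^T + 1). Then for every x_0 with 0 ≤ x_0 ≤ H/2 one has 0 ≤ F(x_0) ≤ H/2; that is, the interval [0, H/2] is an invariant set of the controlled map F. -/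
lemma tent_le_half (H y : ℝ) (hH : 0 ≤ H) : tent H y ≤ H / 2 := by
  unfold tent; split <;> rename_i h
  · nlinarith [mul_nonneg hH (by linarith : (0:ℝ) ≤ 1/2 - y)]
  · nlinarith [mul_nonneg hH (by linarith : (0:ℝ) ≤ y - 1/2)]

lemma tent_le_lin (H y : ℝ) (hH : 0 ≤ H) : tent H y ≤ H * y := by
  unfold tent; split <;> rename_i h
  · exact le_rfl
  · nlinarith [mul_nonneg hH (by linarith : (0:ℝ) ≤ 2*y - 1)]

lemma tent_le_lin' (H y : ℝ) (hH : 0 ≤ H) : tent H y ≤ H * (1 - y) := by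
  unfold tent; split <;> rename_i h
  · nlinarith [mul_nonneg hH (by linarith : (0:ℝ) ≤ 1 - 2*y)]
  · exact le_rfl

lemma iter_le (H x : ℝ) (hH : 0 ≤ H) (T : ℕ) : (tent H)^[T] x ≤ H ^ T * x := by
  induction T with
  | zero => simp
  | succ n ih =>
    rw [Function.iterate_succ_apply']
    calc tent H ((tent H)^[n] x) ≤ H * ((tent H)^[n] x) := tent_le_lin _ _ hH
      _ ≤ H * (H ^ n * x) := mul_le_mul_of_nonneg_left ih hH
      _ = H ^ (n+1) * x := by ring

lemma iter_le' (H x : ℝ) (hH : 0 ≤ H) (T : ℕ) (hT : 1 ≤ T) :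
    (tent H)^[T] x ≤ H ^ T * (1 - x) := by
  obtain ⟨S, rfl⟩ : ∃ S, T = S + 1 := ⟨T - 1, by omega⟩
  rw [Function.iterate_succ_apply]
  calc (tent H)^[S] (tent H x) ≤ H ^ S * (tent H x) := iter_le H _ hH S
    _ ≤ H ^ S * (H * (1 - x)) := mul_le_mul_of_nonneg_left (tent_le_lin' _ _ hH) (by positivity)
    _ = H ^ (S+1) * (1 - x) := by ring

lemma iter_le_half (H x : ℝ) (hH : 0 ≤ H) (T : ℕ) (hT : 1 ≤ T) :
    (tent H)^[T] x ≤ H / 2 := by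
  obtain ⟨S, rfl⟩ : ∃ S, T = S + 1 := ⟨T - 1, by omega⟩
  rw [Function.iterate_succ_apply']
  exact tent_le_half _ _ hH

lemma iter_lower (H : ℝ) (hH : 2 ≤ H) (T : ℕ) (x : ℝ) (hx0 : 0 ≤ x) (hx1 : x ≤ H / 2) :
    0 ≤ (H + 1) * ((tent H)^[T] x) + (H ^ (T+1) - 1) * x := by
  have hH0 : (0:ℝ) ≤ H := by linarith
  induction T with
  | zero => simp; nlinarith
  | succ n ih =>
    set y := (tent H)^[n] x with hy
    have hylin : y ≤ H ^ n * x := iter_le H x hH0 n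
    have hyhalf : y ≤ H / 2 := by
      rcases Nat.eq_zero_or_pos n with h | h
      · subst h; simpa [hy] using hx1
      · exact iter_le_half H x hH0 n h
    have hpow : (1:ℝ) ≤ H ^ n := one_le_pow₀ (by linarith)
    rw [Function.iterate_succ_apply', ← hy]
    have e : H ^ (n+1+1) = H ^ n * H ^ 2 := by ring
    have e1 : H ^ (n+1) = H ^ n * H := by ring
    rw [e]
    unfold tent
    split <;> rename_i hc
    · rw [e1] at ih
      nlinarith [mul_nonneg hH0 ih, mul_nonneg (by linarith : (0:ℝ) ≤ H - 1) hx0]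
    · rcases le_or_gt (H ^ n * x) (H / 2) with hsub | hsub
      · nlinarith [mul_nonneg (by nlinarith : (0:ℝ) ≤ (H+1)*H) (by linarith : (0:ℝ) ≤ H^n * x - y),
          mul_nonneg hH0 (by linarith : (0:ℝ) ≤ H/2 - H^n * x)]
      · nlinarith [mul_nonneg (by linarith : (0:ℝ) ≤ 2 * (H^n * x) - H) (by nlinarith : (0:ℝ) ≤ H^2),
          mul_nonneg (by nlinarith : (0:ℝ) ≤ (H+1)*H) (by linarith : (0:ℝ) ≤ H/2 - y)]

theorem ctrl_interval_invariant (H : ℝ) (hH : 2 ≤ H) (T : ℕ) (hT : 1 ≤ T)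
    (ϑ : ℝ) (hϑ1 : (H ^ T - 1 / H) / (H ^ T + 1) < ϑ) (hϑ2 : ϑ ≤ H ^ T / (H ^ T + 1)) :
    ∀ x₀ ∈ Set.Icc (0 : ℝ) (H / 2), ctrl H T ϑ x₀ ∈ Set.Icc (0 : ℝ) (H / 2) := by
  intro x₀ hx
  obtain ⟨hx0, hx1⟩ := hx
  have hH0 : (0:ℝ) < H := by linarith
  set A : ℝ := H ^ T with hA
  have hA2 : (2:ℝ) ≤ A := le_trans hH (le_self_pow₀ (by linarith) (by omega))
  have hA1 : (0:ℝ) < A + 1 := by linarith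
  have h1 : A * H - 1 < ϑ * (A + 1) * H := by
    have h := (div_lt_iff₀ hA1).mp hϑ1
    have h1H : (1/H) * H = 1 := by field_simp
    nlinarith [mul_lt_mul_of_pos_right h hH0]
  have h2 : ϑ * (A + 1) ≤ A := by
    have := (le_div_iff₀ hA1).mp hϑ2
    linarith
  have hθ1 : ϑ < 1 := by nlinarith
  have hs : 0 ≤ 1 - ϑ := by linarith
  have hθ0 : 0 < ϑ := by nlinarith
  set y : ℝ := (tent H)^[T] x₀ with hy
  have hyhalf : y ≤ H / 2 := iter_le_half H x₀ (by linarith) T hT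
  have hylin' : y ≤ A * (1 - x₀) := iter_le' H x₀ (by linarith) T hT
  have hylow : 0 ≤ (H + 1) * y + (A * H - 1) * x₀ := by
    have e : H ^ (T+1) = A * H := by rw [hA]; ring
    have h := iter_lower H hH T x₀ hx0 hx1
    rw [e] at h; exact h
  set z : ℝ := ϑ * x₀ + (1 - ϑ) * y with hz
  have hz0 : 0 ≤ z := by
    rw [hz]
    nlinarith [mul_nonneg hs hylow, mul_nonneg hθ0.le hx0]
  have hz1 : z ≤ 1 := by
    rw [hz]
    have hkey : (1 - ϑ) * H * (A + 1) ≤ H + 1 := by nlinarith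
    rcases le_or_gt ((1 - x₀) * (A + 1)) (H + 1) with hu | hu
    · have hfac : 0 ≤ (1 - ϑ) * A - ϑ := by nlinarith
      nlinarith [mul_nonneg (by linarith : (0:ℝ) ≤ (H+1) - (1-x₀)*(A+1)) hfac,
        mul_nonneg hs (by linarith : (0:ℝ) ≤ A * (1 - x₀) - y)]
    · nlinarith [mul_nonneg hθ0.le (by linarith : (0:ℝ) ≤ (1-x₀)*(A+1) - (H+1)),
        mul_nonneg hs (by linarith : (0:ℝ) ≤ H/2 - y)]
  constructor
  · show (0:ℝ) ≤ tent H z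
    unfold tent; split <;> rename_i h
    · positivity
    · nlinarith
  · exact tent_le_half H z (by linarith)
end

section
/- Let H ≥ 2 and T ≥ 1. The number of points x ∈ [0, 1] of exact period T for the generalized tent map f equals Σ_{d | T} μ(d)·2^{T/d}, where μ is the Möbius function; consequently the number of periodic orbits of exact period T equals (1/T)·Σ_{d | T} μ(d)·2^{T/d}, and in particular T divides Σ_{d | T} μ(d)·2^{T/d}. -/
namespace TentProof

variable {H : ℝ}

lemma tent_zero : tent H 0 = 0 := by simp [tent]

lemma iter_neg (hH : 2 ≤ H) : ∀ n : ℕ, ∀ y : ℝ, y < 0 → (tent H)^[n] y ≤ y := by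
  intro n
  induction n with
  | zero => intro y _; simp
  | succ n ih =>
    intro y hy
    rw [Function.iterate_succ_apply]
    have ht : tent H y < y := by
      simp only [tent, if_pos (by linarith : y ≤ 1 / 2)]
      nlinarith
    exact (ih _ (ht.trans hy)).trans ht.le

lemma periodic_mem_Icc (hH : 2 ≤ H) {y : ℝ} {n : ℕ} (hn : 1 ≤ n)
    (hy : (tent H)^[n] y = y) : y ∈ Set.Icc (0 : ℝ) 1 := by
  obtain ⟨m, rfl⟩ : ∃ m, n = m + 1 := ⟨n - 1, (Nat.succ_pred_eq_of_pos hn).symm⟩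
  rw [Function.iterate_succ_apply] at hy
  constructor
  · by_contra h
    push_neg at h
    have ht : tent H y < y := by
      simp only [tent, if_pos (by linarith : y ≤ 1 / 2)]
      nlinarith
    have := iter_neg hH m (tent H y) (ht.trans h)
    rw [hy] at this
    linarith
  · by_contra h
    push_neg at h
    have ht : tent H y < 0 := by
      simp only [tent, if_neg (by push_neg; linarith : ¬ y ≤ 1 / 2)]
      nlinarith
    have := iter_neg hH m (tent H y) ht
    rw [hy] at this
    linarith

lemma not_per_half (hH : 2 ≤ H) {n : ℕ} (hn : 1 ≤ n) :
    (tent H)^[n] (1 / 2 : ℝ) ≠ 1 / 2 := by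
  intro h
  have h1 : tent H (1 / 2 : ℝ) = H / 2 := by
    simp only [tent, if_pos (le_refl _)]; ring
  obtain ⟨m, rfl⟩ : ∃ m, n = m + 1 := ⟨n - 1, (Nat.succ_pred_eq_of_pos hn).symm⟩
  rw [Function.iterate_succ_apply, h1] at h
  rcases eq_or_lt_of_le (by linarith : (1 : ℝ) ≤ H / 2) with heq | hlt
  · rw [← heq] at h
    cases m with
    | zero => norm_num at h
    | succ k =>
      rw [Function.iterate_succ_apply] at h
      have ht1 : tent H (1 : ℝ) = 0 := by
        simp only [tent, if_neg (by norm_num : ¬ (1:ℝ) ≤ 1/2)]; ring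
      rw [ht1, Function.iterate_fixed tent_zero] at h
      norm_num at h
  · cases m with
    | zero => simp only [Function.iterate_zero_apply] at h; linarith
    | succ k =>
      rw [Function.iterate_succ_apply] at h
      have ht : tent H (H / 2) < 0 := by
        simp only [tent, if_neg (by push_neg; linarith : ¬ H / 2 ≤ 1 / 2)]
        nlinarith
      have := iter_neg hH k (tent H (H / 2)) ht
      rw [h] at this
      linarith

/-- inverse branches -/
noncomputable def gi (H : ℝ) (b : Bool) (y : ℝ) : ℝ := bif b then 1 - y / H else y / H

lemma gi_false_mem (hH : 2 ≤ H) {y : ℝ} (hy : y ∈ Set.Icc (0 : ℝ) 1) :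
    0 ≤ gi H false y ∧ gi H false y ≤ 1 / 2 := by
  have hH0 : (0 : ℝ) < H := by linarith
  obtain ⟨h0, h1⟩ := hy
  refine ⟨by simp only [gi, cond_false]; positivity, ?_⟩
  simp only [gi, cond_false]
  rw [div_le_iff₀ hH0]
  nlinarith

lemma gi_true_mem (hH : 2 ≤ H) {y : ℝ} (hy : y ∈ Set.Icc (0 : ℝ) 1) :
    1 / 2 ≤ gi H true y ∧ gi H true y ≤ 1 := by
  have h := gi_false_mem hH hy
  simp only [gi, cond_false] at h
  simp only [gi, cond_true]
  constructor <;> linarith [h.1, h.2]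

lemma gi_mem (hH : 2 ≤ H) (b : Bool) {y : ℝ} (hy : y ∈ Set.Icc (0 : ℝ) 1) :
    gi H b y ∈ Set.Icc (0 : ℝ) 1 := by
  cases b
  · have h := gi_false_mem hH hy
    exact ⟨h.1, by linarith [h.2]⟩
  · have h := gi_true_mem hH hy
    exact ⟨by linarith [h.1], h.2⟩

lemma tent_gi (hH : 2 ≤ H) (b : Bool) {y : ℝ} (hy : y ∈ Set.Icc (0 : ℝ) 1) :
    tent H (gi H b y) = y := by
  have hH0 : (0 : ℝ) < H := by linarith
  obtain ⟨h0, h1⟩ := hy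
  cases b
  · have hle : y / H ≤ 1 / 2 := by rw [div_le_iff₀ hH0]; nlinarith
    simp only [gi, cond_false, tent, if_pos hle]
    field_simp
    simp only [if_pos (show y * 2 ≤ H by linarith)]
  · simp only [gi, cond_true, tent]
    by_cases hc : 1 - y / H ≤ 1 / 2
    · change (if 1 - y / H ≤ 1 / 2 then H * (1 - y / H) else H * (1 - (1 - y / H))) = y; rw [if_pos hc]
      have hge : H / 2 ≤ y := by
        rw [sub_le_iff_le_add] at hc
        have : 1 / 2 ≤ y / H := by linarith
        rw [le_div_iff₀ hH0] at this
        linarith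
      have : y = 1 ∧ H = 2 := by constructor <;> nlinarith
      rw [this.1, this.2]; norm_num
    · change (if 1 - y / H ≤ 1 / 2 then H * (1 - y / H) else H * (1 - (1 - y / H))) = y; rw [if_neg hc]
      field_simp
      ring

noncomputable def Gc (H : ℝ) : List Bool → ℝ → ℝ
  | [] => id
  | b :: l => fun y => gi H b (Gc H l y)

lemma Gc_mem (hH : 2 ≤ H) (s : List Bool) {y : ℝ} (hy : y ∈ Set.Icc (0 : ℝ) 1) :
    Gc H s y ∈ Set.Icc (0 : ℝ) 1 := by
  induction s with
  | nil => simpa [Gc]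
  | cons b l ih => exact gi_mem hH b ih

lemma Gc_cont (s : List Bool) : Continuous (Gc H s) := by
  induction s with
  | nil => exact continuous_id
  | cons b l ih =>
    have hgi : Continuous (gi H b) := by
      cases b
      · show Continuous fun y : ℝ => y / H
        fun_prop
      · show Continuous fun y : ℝ => 1 - y / H
        fun_prop
    exact hgi.comp ih

lemma iterate_Gc_drop (hH : 2 ≤ H) (s : List Bool) {y : ℝ} (hy : y ∈ Set.Icc (0 : ℝ) 1) :
    ∀ j ≤ s.length, (tent H)^[j] (Gc H s y) = Gc H (s.drop j) y := by
  induction s with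
  | nil =>
    intro j hj
    obtain rfl : j = 0 := Nat.le_zero.mp (by simpa using hj)
    simp
  | cons b l ih =>
    intro j hj
    cases j with
    | zero => simp
    | succ j =>
      rw [Function.iterate_succ_apply]
      show (tent H)^[j] (tent H (gi H b (Gc H l y))) = _
      rw [tent_gi hH b (Gc_mem hH l hy)]
      simpa using ih j (by simpa using hj)

lemma Gc_dist (hH : 2 ≤ H) (s : List Bool) (y z : ℝ) :
    |Gc H s y - Gc H s z| = |y - z| / H ^ s.length := by
  have hH0 : (0 : ℝ) < H := by linarith
  induction s with
  | nil => simp [Gc]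
  | cons b l ih =>
    show |gi H b (Gc H l y) - gi H b (Gc H l z)| = _
    have key : ∀ u v : ℝ, |gi H b u - gi H b v| = |u - v| / H := by
      intro u v
      cases b
      · simp only [gi, cond_false]
        rw [div_sub_div_same, abs_div, abs_of_pos hH0]
      · simp only [gi, cond_true]
        rw [show 1 - u / H - (1 - v / H) = (v - u) / H by ring, abs_div, abs_of_pos hH0,
          abs_sub_comm]
    rw [key, ih, List.length_cons, div_div, pow_succ]

lemma exists_fixed (hH : 2 ≤ H) (s : List Bool) :
    ∃ x ∈ Set.Icc (0 : ℝ) 1, Gc H s x = x := by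
  have hc : ContinuousOn (fun y => Gc H s y - y) (Set.Icc (0 : ℝ) 1) :=
    ((Gc_cont s).sub continuous_id).continuousOn
  have h0 : (0 : ℝ) ≤ Gc H s 0 - 0 := by
    have := (Gc_mem hH s (by norm_num : (0:ℝ) ∈ Set.Icc (0:ℝ) 1)).1; linarith
  have h1 : Gc H s 1 - 1 ≤ 0 := by
    have := (Gc_mem hH s (by norm_num : (1:ℝ) ∈ Set.Icc (0:ℝ) 1)).2; linarith
  have := intermediate_value_Icc' (by norm_num : (0:ℝ) ≤ 1) hc
  obtain ⟨x, hx, hfx⟩ := this ⟨h1, h0⟩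
  exact ⟨x, hx, by dsimp at hfx; linarith⟩


lemma iter_expand (hH : 2 ≤ H) {x y : ℝ} :
    ∀ n : ℕ, (∀ j < n, ((tent H)^[j] x ≤ 1 / 2 ↔ (tent H)^[j] y ≤ 1 / 2)) →
      |(tent H)^[n] x - (tent H)^[n] y| = H ^ n * |x - y| := by
  have hH0 : (0 : ℝ) < H := by linarith
  intro n
  induction n with
  | zero => intro _; simp
  | succ n ih =>
    intro h
    rw [Function.iterate_succ_apply', Function.iterate_succ_apply']
    set a := (tent H)^[n] x with ha
    set b := (tent H)^[n] y with hb
    have hab : a ≤ 1 / 2 ↔ b ≤ 1 / 2 := h n (Nat.lt_succ_self n)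
    have step : |tent H a - tent H b| = H * |a - b| := by
      by_cases hc : a ≤ 1 / 2
      · rw [tent, tent, if_pos hc, if_pos (hab.1 hc), ← mul_sub, abs_mul, abs_of_pos hH0]
      · rw [tent, tent, if_neg hc, if_neg (fun h' => hc (hab.2 h')),
          show H * (1 - a) - H * (1 - b) = H * (b - a) by ring, abs_mul, abs_of_pos hH0,
          abs_sub_comm]
    rw [step, ih (fun j hj => h j (hj.trans (Nat.lt_succ_self n))), pow_succ]
    ring

lemma card_F (hH : 2 ≤ H) (n : ℕ) (hn : 1 ≤ n) :
    ({x ∈ Set.Icc (0 : ℝ) 1 | (tent H)^[n] x = x}).Finite ∧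
      ({x ∈ Set.Icc (0 : ℝ) 1 | (tent H)^[n] x = x}).ncard = 2 ^ n := by
  have hH1 : (1 : ℝ) < H := by linarith
  set F : Set ℝ := {x ∈ Set.Icc (0 : ℝ) 1 | (tent H)^[n] x = x} with hF
  set Ψ : F → (Fin n → Bool) := fun x j => decide ((1 : ℝ) / 2 < (tent H)^[j.1] x.1) with hΨ
  have hinj : Function.Injective Ψ := by
    rintro ⟨x, hx01, hxp⟩ ⟨y, hy01, hyp⟩ h
    have key : ∀ j < n, ((tent H)^[j] x ≤ 1 / 2 ↔ (tent H)^[j] y ≤ 1 / 2) := by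
      intro j hj
      have := congrFun h ⟨j, hj⟩
      simp only [hΨ, decide_eq_decide] at this
      simp only [← not_lt]
      exact not_congr this
    have hexp := iter_expand hH n key
    rw [hxp, hyp] at hexp
    have hpow : (1 : ℝ) < H ^ n := one_lt_pow₀ hH1 (by omega)
    have : |x - y| = 0 := by nlinarith [abs_nonneg (x - y)]
    exact Subtype.ext (by linarith [abs_eq_zero.mp this, sub_eq_zero.mp (abs_eq_zero.mp this)])
  have hsurj : Function.Surjective Ψ := by
    intro s
    set L : List Bool := List.ofFn s with hL
    have hlen : L.length = n := List.length_ofFn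
    obtain ⟨x, hx01, hxfix⟩ := exists_fixed hH L
    have hdrop : ∀ j ≤ n, (tent H)^[j] x = Gc H (L.drop j) x := by
      intro j hj
      conv_lhs => rw [← hxfix]
      exact iterate_Gc_drop hH L hx01 j (by omega)
    have hxp : (tent H)^[n] x = x := by
      rw [hdrop n le_rfl, ← hlen, List.drop_length]
      rfl
    refine ⟨⟨x, hx01, hxp⟩, ?_⟩
    funext j
    have hjn : j.1 < L.length := by omega
    have hiter : (tent H)^[j.1] x = gi H (s j) (Gc H (L.drop (j.1 + 1)) x) := by
      rw [hdrop j.1 (le_of_lt j.2), List.drop_eq_getElem_cons hjn]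
      have : L[j.1] = s j := by
        simp only [hL, List.getElem_ofFn, Fin.eta]
      rw [this]
      rfl
    have hw : Gc H (L.drop (j.1 + 1)) x ∈ Set.Icc (0 : ℝ) 1 := Gc_mem hH _ hx01
    show decide ((1 : ℝ) / 2 < (tent H)^[j.1] x) = s j
    rcases Bool.eq_false_or_eq_true (s j) with hs | hs
    · rw [hs] at hiter ⊢
      have h12 := (gi_true_mem hH hw).1
      rcases lt_or_eq_of_le h12 with hlt | heq
      · rw [hiter]
        exact decide_eq_true hlt
      · exfalso
        have hhalf : (tent H)^[j.1] x = 1 / 2 := by rw [hiter, ← heq]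
        have hper : (tent H)^[n] ((tent H)^[j.1] x) = (tent H)^[j.1] x := by
          rw [← Function.iterate_add_apply, add_comm, Function.iterate_add_apply, hxp]
        rw [hhalf] at hper
        exact not_per_half hH hn hper
    · rw [hs] at hiter ⊢
      have hle := (gi_false_mem hH hw).2
      rw [hiter]
      exact decide_eq_false (not_lt.mpr hle)
  have hequiv := Equiv.ofBijective Ψ ⟨hinj, hsurj⟩
  have hfin : Finite F := Finite.of_equiv _ hequiv.symm
  have hcard : F.ncard = 2 ^ n := by
    rw [← Nat.card_coe_set_eq, Nat.card_congr hequiv]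
    simp [Nat.card_eq_fintype_card]
  exact ⟨Set.finite_coe_iff.mp hfin, hcard⟩

end TentProof

open ArithmeticFunction in
theorem card_exact_period_points_moebius (H : ℝ) (hH : 2 ≤ H) (T : ℕ) (hT : 1 ≤ T) :
    let P : Set ℝ := {x ∈ Set.Icc (0 : ℝ) 1 |
      (tent H)^[T] x = x ∧ ∀ j : ℕ, 1 ≤ j → j < T → (tent H)^[j] x ≠ x}
    let orb : ℝ → Set ℝ := fun x => (fun j => (tent H)^[j] x) '' Set.Iio T
    let 𝒪 : Set (Set ℝ) := {s | ∃ x ∈ P, s = orb x}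
    let S : ℤ := ∑ d ∈ T.divisors, moebius d * 2 ^ (T / d)
    (P.ncard : ℤ) = S ∧ (T : ℤ) ∣ S ∧ (𝒪.ncard : ℤ) = S / T := by
  intro P orb 𝒪 S
  classical
  have hTpos : 0 < T := hT
  set A : ℕ → Set ℝ :=
    fun d => {x ∈ Set.Icc (0 : ℝ) 1 | Function.minimalPeriod (tent H) x = d} with hA
  -- finiteness of A d
  have hAfin : ∀ d : ℕ, 1 ≤ d → (A d).Finite := by
    intro d hd
    apply Set.Finite.subset (TentProof.card_F hH d hd).1
    rintro x ⟨hx01, hmp⟩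
    refine ⟨hx01, ?_⟩
    rw [← hmp]
    exact Function.isPeriodicPt_minimalPeriod (tent H) x
  -- divisor sum identity
  have hsum : ∀ n : ℕ, 0 < n → ∑ d ∈ n.divisors, ((A d).ncard : ℤ) = 2 ^ n := by
    intro n hn
    obtain ⟨hFfin, hFcard⟩ := TentProof.card_F hH n hn
    have hmap : ∀ x ∈ hFfin.toFinset, Function.minimalPeriod (tent H) x ∈ n.divisors := by
      intro x hx
      rw [Set.Finite.mem_toFinset] at hx
      exact Nat.mem_divisors.mpr ⟨Function.IsPeriodicPt.minimalPeriod_dvd hx.2, by omega⟩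
    have hcardsum := Finset.card_eq_sum_card_fiberwise hmap
    have hFS : hFfin.toFinset.card = 2 ^ n := by
      rw [← Set.ncard_eq_toFinset_card _ hFfin, hFcard]
    have hfib : ∀ d ∈ n.divisors,
        ((hFfin.toFinset.filter fun x => Function.minimalPeriod (tent H) x = d).card : ℤ)
          = ((A d).ncard : ℤ) := by
      intro d hd
      obtain ⟨hdvd, hn0⟩ := Nat.mem_divisors.mp hd
      have hset : ↑(hFfin.toFinset.filter fun x => Function.minimalPeriod (tent H) x = d)
          = A d := by
        ext x
        simp only [Finset.coe_filter, Set.mem_setOf_eq, Set.Finite.mem_toFinset, hA,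
          Set.mem_sep_iff]
        constructor
        · rintro ⟨⟨hx01, _⟩, hmp⟩
          exact ⟨hx01, hmp⟩
        · rintro ⟨hx01, hmp⟩
          exact ⟨⟨hx01, Function.isPeriodicPt_iff_minimalPeriod_dvd.mpr (hmp ▸ hdvd)⟩, hmp⟩
      rw [← Set.ncard_coe_finset, hset]
    rw [show ((2:ℤ))^n = ((2^n : ℕ) : ℤ) by push_cast; ring, ← hFS, hcardsum]
    push_cast
    exact (Finset.sum_congr rfl hfib).symm
  -- Möbius inversion
  have hmob := (ArithmeticFunction.sum_eq_iff_sum_smul_moebius_eq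
    (f := fun d => ((A d).ncard : ℤ)) (g := fun m => 2 ^ m)).mp hsum T hTpos
  have hS : S = ((A T).ncard : ℤ) := by
    rw [← hmob]
    show (∑ d ∈ T.divisors, (moebius d : ℤ) * 2 ^ (T / d)) = _
    rw [← Nat.sum_divisorsAntidiagonal (fun d e => ((moebius d : ℤ) * 2 ^ e))]
    simp [smul_eq_mul]
  -- P = A T
  have hPA : P = A T := by
    ext x
    show (x ∈ Set.Icc (0:ℝ) 1 ∧ _) ↔ (x ∈ Set.Icc (0:ℝ) 1 ∧ _)
    constructor
    · rintro ⟨hx01, hxp, hmin⟩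
      refine ⟨hx01, ?_⟩
      have hp : Function.IsPeriodicPt (tent H) T x := hxp
      have hle := hp.minimalPeriod_le hTpos
      have hpos := hp.minimalPeriod_pos hTpos
      rcases lt_or_eq_of_le hle with hlt | heq
      · exact absurd (Function.isPeriodicPt_minimalPeriod (tent H) x) (hmin _ hpos hlt)
      · exact heq
    · rintro ⟨hx01, hmp⟩
      have hper : (tent H)^[T] x = x := by
        have := Function.isPeriodicPt_minimalPeriod (tent H) x
        rwa [hmp] at this
      refine ⟨hx01, hper, ?_⟩
      intro j hj1 hjT hjx
      have : Function.minimalPeriod (tent H) x ≤ j :=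
        Function.IsPeriodicPt.minimalPeriod_le hj1 hjx
      omega
  -- orbits stay in A T
  have hAper : ∀ x ∈ A T, (tent H)^[T] x = x := by
    rintro x ⟨_, hmp⟩
    have := Function.isPeriodicPt_minimalPeriod (tent H) x
    rwa [hmp] at this
  have hiterP : ∀ x ∈ A T, ∀ j : ℕ, (tent H)^[j] x ∈ A T := by
    intro x hx j
    obtain ⟨hx01, hmp⟩ := hx
    have hper : Function.IsPeriodicPt (tent H) T x := hAper x ⟨hx01, hmp⟩
    have hpp : x ∈ Function.periodicPts (tent H) := Function.mk_mem_periodicPts hTpos hper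
    refine ⟨?_, ?_⟩
    · have hpj : (tent H)^[T] ((tent H)^[j] x) = (tent H)^[j] x := by
        rw [← Function.iterate_add_apply, add_comm, Function.iterate_add_apply, hper.eq]
      exact TentProof.periodic_mem_Icc hH hT hpj
    · rw [Function.minimalPeriod_apply_iterate hpp, hmp]
  -- orbit as range
  have horb_range : ∀ x : ℝ, (tent H)^[T] x = x →
      orb x = Set.range (fun k : ℕ => (tent H)^[k] x) := by
    intro x hx
    apply Set.Subset.antisymm
    · rintro _ ⟨k, _, rfl⟩
      exact ⟨k, rfl⟩
    · rintro _ ⟨k, rfl⟩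
      have hpk : Function.IsPeriodicPt (tent H) T x := hx
      exact ⟨k % T, Nat.mod_lt _ hTpos, hpk.iterate_mod_apply k⟩
  -- orbit shift invariance
  have horb_shift : ∀ x ∈ A T, ∀ j : ℕ, orb ((tent H)^[j] x) = orb x := by
    intro x hx j
    have hperx : (tent H)^[T] x = x := hAper x hx
    have hperj : (tent H)^[T] ((tent H)^[j] x) = (tent H)^[j] x :=
      hAper _ (hiterP x hx j)
    rw [horb_range _ hperj, horb_range x hperx]
    apply Set.Subset.antisymm
    · rintro _ ⟨k, rfl⟩
      refine ⟨k + j, ?_⟩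
      show (tent H)^[k + j] x = (tent H)^[k] ((tent H)^[j] x)
      rw [Function.iterate_add_apply]
    · rintro _ ⟨k, rfl⟩
      refine ⟨k + j * (T - 1), ?_⟩
      show (tent H)^[k + j * (T - 1)] ((tent H)^[j] x) = (tent H)^[k] x
      rw [← Function.iterate_add_apply]
      have hmul : j * (T - 1) + j = j * T := by
        have h1 : j * (T - 1) + j = j * ((T - 1) + 1) := by ring
        rw [h1, Nat.sub_add_cancel hT]
      have harith : k + j * (T - 1) + j = k + j * T := by omega
      rw [harith, Function.iterate_add_apply]
      congr 1
      have hpjT : Function.IsPeriodicPt (tent H) (j * T) x := by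
        have hpk : Function.IsPeriodicPt (tent H) T x := hperx
        rw [Nat.mul_comm]
        exact hpk.mul_const j
      exact hpjT.eq
  -- orbit cardinality
  have horb_card : ∀ x ∈ A T, (orb x).ncard = T := by
    intro x hx
    obtain ⟨hx01, hmp⟩ := hx
    have hinj : Set.InjOn (fun j : ℕ => (tent H)^[j] x) (Set.Iio T) := by
      rw [← hmp]
      exact Function.iterate_injOn_Iio_minimalPeriod
    show ((fun j : ℕ => (tent H)^[j] x) '' Set.Iio T).ncard = T
    rw [Set.ncard_image_of_injOn hinj, ← Finset.coe_Iio, Set.ncard_coe_finset, Nat.card_Iio]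
  -- counting orbits
  have hPfin : P.Finite := hPA ▸ hAfin T hT
  have hmem : ∀ x ∈ hPfin.toFinset, orb x ∈ hPfin.toFinset.image orb :=
    fun x hx => Finset.mem_image_of_mem orb hx
  have hfibcard := Finset.card_eq_sum_card_fiberwise hmem
  have hfib : ∀ s ∈ hPfin.toFinset.image orb,
      (hPfin.toFinset.filter fun x => orb x = s).card = T := by
    intro s hs
    obtain ⟨x₀, hx₀PF, rfl⟩ := Finset.mem_image.mp hs
    have hx₀P : x₀ ∈ P := (Set.Finite.mem_toFinset _).mp hx₀PF
    have hx₀A : x₀ ∈ A T := hPA ▸ hx₀P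
    have hset : ↑(hPfin.toFinset.filter fun x => orb x = orb x₀) = orb x₀ := by
      ext y
      simp only [Finset.coe_filter, Set.mem_setOf_eq, Set.Finite.mem_toFinset]
      constructor
      · rintro ⟨hyP, horbeq⟩
        rw [← horbeq]
        exact ⟨0, hTpos, by simp⟩
      · intro hy
        obtain ⟨j, _, rfl⟩ := hy
        exact ⟨hPA ▸ hiterP x₀ hx₀A j, horb_shift x₀ hx₀A j⟩
    calc (hPfin.toFinset.filter fun x => orb x = orb x₀).card
        = (↑(hPfin.toFinset.filter fun x => orb x = orb x₀) : Set ℝ).ncard :=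
          (Set.ncard_coe_finset _).symm
      _ = (orb x₀).ncard := by rw [hset]
      _ = T := horb_card x₀ hx₀A
  have hPcount : hPfin.toFinset.card = (hPfin.toFinset.image orb).card * T := by
    rw [hfibcard, Finset.sum_congr rfl hfib, Finset.sum_const, smul_eq_mul]
  have hOcoe : 𝒪 = ↑(hPfin.toFinset.image orb) := by
    ext s
    simp only [Set.mem_setOf_eq, Finset.coe_image, Set.mem_image, Set.Finite.coe_toFinset]
    constructor
    · rintro ⟨x, hx, rfl⟩
      exact ⟨x, hx, rfl⟩
    · rintro ⟨x, hx, rfl⟩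
      exact ⟨x, hx, rfl⟩
  have hOncard : 𝒪.ncard = (hPfin.toFinset.image orb).card := by
    rw [hOcoe, Set.ncard_coe_finset]
  have hPncard : P.ncard = hPfin.toFinset.card := Set.ncard_eq_toFinset_card _ hPfin
  -- conclusion
  have h1 : (P.ncard : ℤ) = S := by
    rw [hPA, hS]
  have hS2 : S = (𝒪.ncard : ℤ) * T := by
    rw [← h1, hPncard, hPcount, hOncard]
    push_cast
    ring
  refine ⟨h1, ⟨(𝒪.ncard : ℤ), by rw [hS2, mul_comm]⟩, ?_⟩
  rw [hS2, Int.mul_ediv_cancel _ (by exact_mod_cast hTpos.ne' : (T : ℤ) ≠ 0)]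
end
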